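/- arXiv:1205.1221 — 7 statements merged into one kernel-verified Lean document; each statement's English description precedes it below -/
import Mathlib

section
/- Let A be the 2-dimensional commutative algebra over K (char K ≠ 2) with e₁e₁ = e₁, e₂e₂ = e₂, e₁e₂ = e₂e₁ = ½(e₁+e₂). Then for every a ∈ K, the element a e₁ + (1-a) e₂ is idempotent; hence A has infinitely many idempotents when K is infinite. -/
/-- The commutative multiplication on `K²` with `e₁e₁ = e₁`, `e₂e₂ = e₂`,
`e₁e₂ = e₂e₁ = ½(e₁ + e₂)`. -/
def mulHalf {K : Type*} [Field K] (x y : K × K) : K × K :=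
  (x.1 * y.1 + (x.1 * y.2 + x.2 * y.1) * (1/2 : K),
   x.2 * y.2 + (x.1 * y.2 + x.2 * y.1) * (1/2 : K))

theorem mulHalf_self {K : Type*} [Field K] (h2 : (2 : K) ≠ 0) (v : K × K) :
    mulHalf v v = (v.1 * (v.1 + v.2), v.2 * (v.1 + v.2)) := by
  simp only [mulHalf, Prod.mk.injEq]
  constructor <;> field_simp <;> ring

theorem mulHalf_self_of_fst_add_snd_eq_one {K : Type*} [Field K] (h2 : (2 : K) ≠ 0)
    {v : K × K} (hv : v.1 + v.2 = 1) : mulHalf v v = v := by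
  rw [mulHalf_self h2, hv, mul_one, mul_one]

/-- Every `a e₁ + (1-a) e₂` is idempotent; hence there are infinitely many idempotents
when `K` is infinite. -/
theorem stmt_5 (K : Type*) [Field K] (h2 : (2 : K) ≠ 0) :
    (∀ a : K, mulHalf (a, 1 - a) (a, 1 - a) = (a, 1 - a)) ∧
      (Infinite K → {v : K × K | mulHalf v v = v}.Infinite) := by
  have idem (a : K) : mulHalf (a, 1 - a) (a, 1 - a) = (a, 1 - a) :=
    mulHalf_self_of_fst_add_snd_eq_one h2 (add_sub_cancel a 1)
  have hinj : Function.Injective (fun a : K => ((a, 1 - a) : K × K)) :=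
    Function.LeftInverse.injective (g := Prod.fst) fun _ => rfl
  exact ⟨idem, fun _ => Set.infinite_of_injective_forall_mem hinj idem⟩
end

section
/- Let A be the 2-dimensional commutative algebra over an algebraically closed field K (char K ≠ 2) with e₁e₁ = e₂ and e₁e₂ = e₂e₁ = α e₁ + β e₂, e₂e₂ = 0, where α ≠ 0. Then A contains a nonzero idempotent element. -/
/-- The commutative multiplication on `K²` with `e₁e₁ = e₂`,
`e₁e₂ = e₂e₁ = α e₁ + β e₂`, `e₂e₂ = 0`. -/
def mul17 {K : Type*} [Field K] (α β : K) (x y : K × K) : K × K :=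
  ((x.1 * y.2 + x.2 * y.1) * α, x.1 * y.1 + (x.1 * y.2 + x.2 * y.1) * β)

/-!
For `v = (x, y)` with `x ≠ 0`, the first coordinate of `v·v = v` reads `2αxy = x`, which forces
`y = 1/(2α)`; the second coordinate then becomes the quadratic `2α x² + 2β x - 1 = 0`, which has a
root because `K` is algebraically closed and `2α ≠ 0`.
-/

theorem mul17_self_eq_self_of_quadratic {K : Type*} [Field K] {α β x : K} (h2 : (2 : K) ≠ 0)
    (hα : α ≠ 0) (hx : 2 * α * (x * x) + 2 * β * x + -1 = 0) :
    mul17 α β (x, (2 * α)⁻¹) (x, (2 * α)⁻¹) = (x, (2 * α)⁻¹) := by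
  simp only [mul17, Prod.mk.injEq]
  constructor
  · field_simp
    ring
  · field_simp
    linear_combination hx

/-- Over an algebraically closed field of characteristic ≠ 2, if `α ≠ 0` then the
algebra contains a nonzero idempotent. -/
theorem stmt_7 (K : Type*) [Field K] [IsAlgClosed K] (h2 : (2 : K) ≠ 0)
    (α β : K) (hα : α ≠ 0) :
    ∃ v : K × K, v ≠ 0 ∧ mul17 α β v v = v := by
  have h2α : 2 * α ≠ 0 := mul_ne_zero h2 hα
  have : NeZero (2 : K) := ⟨h2⟩
  obtain ⟨x, hx⟩ :=
    exists_quadratic_eq_zero h2α (IsAlgClosed.exists_eq_mul_self (discrim _ (2 * β) (-1)))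
  refine ⟨(x, (2 * α)⁻¹), fun h => ?_, mul17_self_eq_self_of_quadratic h2 hα hx⟩
  exact inv_ne_zero h2α (congrArg Prod.snd h)
end

section
/- Let A be the 2-dimensional commutative algebra over a field K with e₁e₁ = e₂, e₁e₂ = e₂e₁ = β e₂, e₂e₂ = 0 (i.e., α₂ = 0 in the family). Then A has no nonzero idempotent element. -/
/-- The commutative multiplication on `K²` with `e₁e₁ = e₂`, `e₁e₂ = e₂e₁ = β e₂`,
`e₂e₂ = 0`. -/
def mul18 {K : Type*} [Field K] (β : K) (x y : K × K) : K × K :=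
  (0, x.1 * y.1 + (x.1 * y.2 + x.2 * y.1) * β)

theorem mul18_fst {K : Type*} [Field K] (β : K) (x y : K × K) : (mul18 β x y).1 = 0 := rfl

theorem mul18_eq_zero_of_fst_eq_zero {K : Type*} [Field K] (β : K) {x y : K × K}
    (hx : x.1 = 0) (hy : y.1 = 0) : mul18 β x y = 0 := by
  simp [mul18, hx, hy]

/-- This algebra has no nonzero idempotent. -/
theorem stmt_8 (K : Type*) [Field K] (β : K) (v : K × K)
    (hidem : mul18 β v v = v) : v = 0 := by
  have hv : v.1 = 0 := hidem ▸ mul18_fst β v v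
  rw [← hidem, mul18_eq_zero_of_fst_eq_zero β hv hv]
end

section
/- In a Jordan algebra A over a field of characteristic ≠ 2, if v₁ and v₂ are idempotent elements, then (v₁v₂)((v₁+v₂)w) = (v₁+v₂)((v₁v₂)w) for every w ∈ A. -/
/-!
Writing `L_x` for multiplication by `x`, the Jordan identity says `[L_{v²}, L_v] = 0`.
The coefficient of `t` in its expansion at `v = a + t b`, isolated by comparing `t = 1` with
`t = -1`, is `[L_{a²}, L_b] + 2 [L_{ab}, L_a] = 0`. For idempotents `a = v₁, b = v₂` this reads
`2 [L_{v₁v₂}, L_{v₁}] = [L_{v₂}, L_{v₁}]`, and adding the same identity with `v₁, v₂` swapped gives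
`2 [L_{v₁v₂}, L_{v₁+v₂}] = 0`.
-/

section JordanAlgebra

variable {K A : Type*} [Field K] [AddCommGroup A] [Module K A] {mul : A →ₗ[K] A →ₗ[K] A}

theorem jordan_polarized (h2 : (2 : K) ≠ 0) (hcomm : ∀ x y : A, mul x y = mul y x)
    (hjordan : ∀ v w : A, mul (mul v w) (mul v v) = mul v (mul w (mul v v))) (a b w : A) :
    mul (mul a a) (mul b w) + (2 : K) • mul (mul a b) (mul a w)
      = mul b (mul (mul a a) w) + (2 : K) • mul a (mul (mul a b) w) := by
  have jordan : ∀ v : A, mul (mul v v) (mul v w) = mul v (mul (mul v v) w) := fun v => by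
    rw [hcomm (mul v v), hjordan, hcomm w]
  have hplus := jordan (a + b)
  have hminus := jordan (a - b)
  simp only [map_add, map_sub, LinearMap.add_apply, LinearMap.sub_apply, hcomm b a] at hplus hminus
  apply smul_right_injective A h2
  linear_combination (norm := module) hplus - hminus - (2 : K) • jordan b

end JordanAlgebra

/-- In a Jordan algebra over a field of characteristic ≠ 2, if `v₁` and `v₂` are
idempotent then `(v₁v₂)((v₁+v₂)w) = (v₁+v₂)((v₁v₂)w)` for all `w`. -/
theorem stmt_9 (K : Type*) [Field K] (h2 : (2 : K) ≠ 0)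
    (A : Type*) [AddCommGroup A] [Module K A]
    (mul : A →ₗ[K] A →ₗ[K] A) (hcomm : ∀ x y : A, mul x y = mul y x)
    (hjordan : ∀ v w : A, mul (mul v w) (mul v v) = mul v (mul w (mul v v)))
    (v₁ v₂ : A) (h₁ : mul v₁ v₁ = v₁) (h₂ : mul v₂ v₂ = v₂) :
    ∀ w : A, mul (mul v₁ v₂) (mul (v₁ + v₂) w) = mul (v₁ + v₂) (mul (mul v₁ v₂) w) := by
  intro w
  have h₁₂ := jordan_polarized h2 hcomm hjordan v₁ v₂ w
  have h₂₁ := jordan_polarized h2 hcomm hjordan v₂ v₁ w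
  rw [h₁] at h₁₂
  rw [h₂, hcomm v₂ v₁] at h₂₁
  simp only [map_add, LinearMap.add_apply]
  apply smul_right_injective A h2
  linear_combination (norm := module) h₁₂ + h₂₁
end

section
/- Let A be a 2-dimensional Jordan algebra over a field of characteristic ≠ 2 containing idempotents v₁, v₂ such that v₁v₂ and v₁+v₂ are linearly independent. Then A is associative. -/
/-!
With `s = v₁ + v₂` one has `s² = 2 v₁v₂ + s`, so `s` and `s²` form a basis of `A`.
The Jordan identity for `(v, w) = (s, s)` and `(s, s²)` says exactly that the associators
`(s, s, s²)` and `(s, s², s²)` vanish. In a commutative algebra the associator is a trilinear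
map which is antisymmetric under exchanging its outer arguments and vanishes when they are
equal, so on a basis `{a, b}` it is determined by its values at `(a, a, b)` and `(a, b, b)`.
-/

namespace LinearMap

variable {R M : Type*} [CommRing R] [AddCommGroup M] [Module R M] (mul : M →ₗ[R] M →ₗ[R] M)

def associator : M →ₗ[R] M →ₗ[R] M →ₗ[R] M :=
  mul.compr₂ mul - ((llcomp R M M M).comp mul).compl₂ mul

@[simp]
theorem associator_apply (x y z : M) :
    mul.associator x y z = mul (mul x y) z - mul x (mul y z) :=
  rfl

variable {mul}

theorem associator_swap (hcomm : ∀ x y, mul x y = mul y x) (x y z : M) :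
    mul.associator x y z = -mul.associator z y x := by
  simp only [associator_apply, neg_sub]
  rw [hcomm (mul x y) z, hcomm x y, hcomm x (mul y z), hcomm y z]

theorem associator_self_self (hcomm : ∀ x y, mul x y = mul y x) (x y : M) :
    mul.associator x y x = 0 := by
  rw [associator_apply, hcomm x y, hcomm x (mul y x), sub_self]

theorem associator_eq_zero_of_span_pair (hcomm : ∀ x y, mul x y = mul y x) {a b : M}
    (hspan : Submodule.span R (Set.range ![a, b]) = ⊤)
    (haab : mul.associator a a b = 0) (habb : mul.associator a b b = 0) :
    mul.associator = 0 := by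
  have hbaa : mul.associator b a a = 0 := by rw [associator_swap hcomm, haab, neg_zero]
  have hbba : mul.associator b b a = 0 := by rw [associator_swap hcomm, habb, neg_zero]
  refine ext_on_range hspan fun i ↦ ext_on_range hspan fun j ↦ ext_on_range hspan fun k ↦ ?_
  fin_cases i <;> fin_cases j <;> fin_cases k <;>
    simp [haab, habb, hbaa, hbba, associator_self_self hcomm]

theorem associator_eq_zero_of_span_self_sq (hcomm : ∀ x y, mul x y = mul y x)
    (hjordan : ∀ v w, mul (mul v w) (mul v v) = mul v (mul w (mul v v))) {s : M}
    (hspan : Submodule.span R (Set.range ![s, mul s s]) = ⊤) :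
    mul.associator = 0 :=
  associator_eq_zero_of_span_pair hcomm hspan (sub_eq_zero.2 (hjordan s s))
    (sub_eq_zero.2 (hjordan s (mul s s)))

end LinearMap

/-- A 2-dimensional Jordan algebra (char K ≠ 2) containing idempotents `v₁, v₂` such
that `v₁v₂` and `v₁+v₂` are linearly independent is associative. -/
theorem stmt_10 (K : Type*) [Field K] (h2 : (2 : K) ≠ 0)
    (A : Type*) [AddCommGroup A] [Module K A] (hdim : Module.finrank K A = 2)
    (mul : A →ₗ[K] A →ₗ[K] A) (hcomm : ∀ x y : A, mul x y = mul y x)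
    (hjordan : ∀ v w : A, mul (mul v w) (mul v v) = mul v (mul w (mul v v)))
    (v₁ v₂ : A) (h₁ : mul v₁ v₁ = v₁) (h₂ : mul v₂ v₂ = v₂)
    (hind : LinearIndependent K ![mul v₁ v₂, v₁ + v₂]) :
    ∀ x y z : A, mul x (mul y z) = mul (mul x y) z := by
  set s := v₁ + v₂ with hs
  have hsq : mul s s = (2 : K) • mul v₁ v₂ + s := by
    simp only [hs, map_add, LinearMap.add_apply, h₁, h₂, hcomm v₂ v₁]
    module
  have hli : LinearIndependent K ![s, mul s s] := by
    have hpair := (LinearIndependent.pair_add_smul_add_smul_iff (0 : K) 1 2 1).2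
      ⟨hind, by simpa using h2.symm⟩
    simpa [hsq] using hpair
  have hassoc := LinearMap.associator_eq_zero_of_span_self_sq hcomm hjordan
    (hli.span_eq_top_of_card_eq_finrank (by simp [hdim]))
  intro x y z
  have hxyz : mul.associator x y z = 0 := by rw [hassoc]; rfl
  exact (sub_eq_zero.1 hxyz).symm
end

section
/- The 2-dimensional commutative algebra over K (char K ≠ 2) with e₁e₁ = e₁, e₁e₂ = e₂e₁ = β e₂, e₂e₂ = 0 satisfies the Jordan identity if and only if β ∈ {0, 1, 1/2}. (In particular for β = 1 and β = 0 it is a Jordan algebra.) -/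
/-!
Writing `v = (a, b)` and `w = (c, d)`, both sides of the Jordan identity have first coordinate
`a³c`, and their second coordinates differ by `β (β - 1) (2β - 1) a²bc`. So the identity holds
exactly when this cubic in `β` vanishes.
-/

/-- The multiplication `e₁e₁ = e₁`, `e₁e₂ = e₂e₁ = β e₂`, `e₂e₂ = 0` on `K²`. -/
def mul16 {K : Type*} [Field K] (β : K) (x y : K × K) : K × K :=
  (x.1 * y.1, β * (x.1 * y.2 + x.2 * y.1))

theorem mul16_jordan_iff {K : Type*} [Field K] (β : K) (v w : K × K) :
    mul16 β (mul16 β v w) (mul16 β v v) = mul16 β v (mul16 β w (mul16 β v v)) ↔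
      β * (β - 1) * (2 * β - 1) * (v.1 ^ 2 * v.2 * w.1) = 0 := by
  simp only [mul16, Prod.ext_iff]
  constructor
  · rintro ⟨-, h⟩
    linear_combination -h
  · intro h
    exact ⟨by ring, by linear_combination -h⟩

theorem mul_sub_one_mul_two_mul_sub_one_eq_zero_iff {K : Type*} [Field K] (β : K) :
    β * (β - 1) * (2 * β - 1) = 0 ↔ β = 0 ∨ β = 1 ∨ β = 1 / 2 := by
  constructor
  · simp only [mul_eq_zero, sub_eq_zero, or_assoc]
    exact Or.imp_right (Or.imp_right eq_one_div_of_mul_eq_one_right)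
  · rintro (rfl | rfl | rfl)
    · ring
    · ring
    -- in characteristic 2 the junk value `1 / 2 = 0` makes the root `1 / 2` coincide with `0`
    · rcases eq_or_ne (2 : K) 0 with h2 | h2
      · simp [h2]
      · field_simp
        ring

theorem stmt_16_general (K : Type*) [Field K] (β : K) :
    (∀ v w : K × K,
        mul16 β (mul16 β v w) (mul16 β v v) = mul16 β v (mul16 β w (mul16 β v v)))
      ↔ (β = 0 ∨ β = 1 ∨ β = 1/2) := by
  simp only [mul16_jordan_iff, ← mul_sub_one_mul_two_mul_sub_one_eq_zero_iff]
  exact ⟨fun h => by simpa using h (1, 1) (1, 0), fun h v w => by simp [h]⟩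

/-- This algebra satisfies the Jordan identity iff `β ∈ {0, 1, 1/2}`. -/
theorem stmt_16 (K : Type*) [Field K] (h2 : (2 : K) ≠ 0) (β : K) :
    (∀ v w : K × K,
        mul16 β (mul16 β v w) (mul16 β v v) = mul16 β v (mul16 β w (mul16 β v v)))
      ↔ (β = 0 ∨ β = 1 ∨ β = 1/2) :=
  stmt_16_general K β
end

section
/- Consider the action of GL(2,F₂) on the set of 256 bilinear multiplications on F₂² given by (f·μ)(x,y) = f(μ(f⁻¹x, f⁻¹y)). The number of orbits of this action (i.e., the number of isomorphism classes of 2-dimensional F₂-algebras) is 52. -/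
/-!
By Burnside's lemma the number of orbits of `GL₂(𝔽₂)` on the multiplications `μ` is
`(1 / 6) ∑_A #{μ | A is an automorphism of μ}`. Writing `μ` through its structure constants
`c i j = μ eᵢ eⱼ ∈ 𝔽₂²`, being an automorphism becomes the finite condition
`A (c i j) = μ (A eᵢ) (A eⱼ)`, which a computation checks: the identity fixes all `256`
multiplications, each of the three involutions `16` and each of the two elements of order three
`4`, so the count is `(256 + 3 * 16 + 2 * 4) / 6 = 52`.
-/

/-- The set of bilinear multiplications on `F₂²` isomorphic to a given one. -/
def orbitOf (μ : (Fin 2 → ZMod 2) →ₗ[ZMod 2] (Fin 2 → ZMod 2) →ₗ[ZMod 2] (Fin 2 → ZMod 2)) :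
    Set ((Fin 2 → ZMod 2) →ₗ[ZMod 2] (Fin 2 → ZMod 2) →ₗ[ZMod 2] (Fin 2 → ZMod 2)) :=
  {μ' | ∃ f : (Fin 2 → ZMod 2) ≃ₗ[ZMod 2] (Fin 2 → ZMod 2),
      ∀ x y, f (μ x y) = μ' (f x) (f y)}

open MulAction Matrix ConjAct

namespace MulAction

variable {G X : Type*} [Group G] [MulAction G X]

theorem card_orbits_eq_card_orbitRel_quotient :
    Nat.card {s : Set X // ∃ x, s = orbit G x} = Nat.card (orbitRel.Quotient G X) := by
  refine Nat.card_congr ((Equiv.subtypeEquivRight fun s => ?_).trans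
    (Equiv.ofInjective _ orbitRel.Quotient.orbit_injective).symm)
  constructor
  · rintro ⟨x, rfl⟩
    exact ⟨Quotient.mk'' x, rfl⟩
  · rintro ⟨y, rfl⟩
    induction y using Quotient.inductionOn' with | h x => exact ⟨x, rfl⟩

theorem card_orbitRel_quotient_mul_card_group [Fintype G] [Finite X] :
    Nat.card (orbitRel.Quotient G X) * Nat.card G = ∑ g : G, Nat.card (fixedBy X g) := by
  classical
  have := Fintype.ofFinite X
  simp only [Nat.card_eq_fintype_card, sum_card_fixedBy_eq_card_orbits_mul_card_group]

end MulAction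

namespace LinearMap

section ConjAction

variable {R M : Type*} [CommSemiring R] [AddCommMonoid M] [Module R M]

/- `M ≃ₗ[R] M` itself already acts on bilinear maps by postcomposition; the `ConjAct` synonym
carries the transport of structure `μ ↦ f ∘ μ ∘ (f⁻¹ × f⁻¹)` instead. -/
instance : MulAction (ConjAct (M ≃ₗ[R] M)) (M →ₗ[R] M →ₗ[R] M) where
  smul f μ := (ofConjAct f).arrowCongr ((ofConjAct f).arrowCongr (ofConjAct f)) μ
  one_smul _ := by ext; rfl
  mul_smul _ _ _ := by ext; rfl

theorem toConjAct_smul_apply (f : M ≃ₗ[R] M) (μ : M →ₗ[R] M →ₗ[R] M) (x y : M) :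
    (toConjAct f • μ) x y = f (μ (f.symm x) (f.symm y)) :=
  rfl

theorem toConjAct_smul_eq_iff {f : M ≃ₗ[R] M} {μ μ' : M →ₗ[R] M →ₗ[R] M} :
    toConjAct f • μ = μ' ↔ ∀ x y, f (μ x y) = μ' (f x) (f y) := by
  refine ⟨fun h x y => by simp [← h, toConjAct_smul_apply], fun h => ?_⟩
  ext x y
  simpa [toConjAct_smul_apply] using h (f.symm x) (f.symm y)

theorem mem_orbit_conjAct_iff {μ μ' : M →ₗ[R] M →ₗ[R] M} :
    μ' ∈ orbit (ConjAct (M ≃ₗ[R] M)) μ ↔ ∃ f : M ≃ₗ[R] M, ∀ x y, f (μ x y) = μ' (f x) (f y) := by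
  simp only [mem_orbit_iff, toConjAct.surjective.exists, toConjAct_smul_eq_iff]

theorem toConjAct_mem_fixedBy_iff {f : M ≃ₗ[R] M} {μ : M →ₗ[R] M →ₗ[R] M} :
    μ ∈ fixedBy _ (toConjAct f) ↔ ∀ x y, f (μ x y) = μ (f x) (f y) :=
  toConjAct_smul_eq_iff

end ConjAction

section StructConst

variable {n R M : Type*} [Fintype n] [DecidableEq n] [CommSemiring R] [AddCommMonoid M]
  [Module R M]

variable (n R M) in
def structConstEquiv : ((n → R) →ₗ[R] (n → R) →ₗ[R] M) ≃ₗ[R] (n → n → M) :=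
  (LinearEquiv.piRing R _ n R).trans (LinearEquiv.piCongrRight fun _ => LinearEquiv.piRing R M n R)

theorem structConstEquiv_apply (μ : (n → R) →ₗ[R] (n → R) →ₗ[R] M) (i j : n) :
    structConstEquiv n R M μ i j = μ (Pi.single i 1) (Pi.single j 1) := by
  simp [structConstEquiv, LinearEquiv.piRing_apply]

theorem apply_eq_sum_structConstEquiv (μ : (n → R) →ₗ[R] (n → R) →ₗ[R] M) (x y : n → R) :
    μ x y = ∑ k, ∑ l, (x k * y l) • structConstEquiv n R M μ k l := by
  conv_lhs => rw [pi_eq_sum_univ' x, pi_eq_sum_univ' y]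
  simp only [map_sum, map_smul, LinearMap.sum_apply, LinearMap.smul_apply, Finset.smul_sum,
    mul_smul, structConstEquiv_apply]
  rw [Finset.sum_comm]
  simp only [smul_comm (y _)]

end StructConst

end LinearMap

namespace Matrix.GeneralLinearGroup

variable {n R : Type*} [Fintype n] [DecidableEq n] [CommRing R]

def toLinearEquiv : GL n R ≃* ((n → R) ≃ₗ[R] (n → R)) :=
  toLin.trans (LinearMap.GeneralLinearGroup.generalLinearEquiv R _)

theorem toLinearEquiv_apply (A : GL n R) (x : n → R) : toLinearEquiv A x = A *ᵥ x := by
  simp [toLinearEquiv, LinearMap.GeneralLinearGroup.coeFn_generalLinearEquiv]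

theorem mem_fixedBy_toConjAct_toLinearEquiv_iff {A : GL n R}
    {μ : (n → R) →ₗ[R] (n → R) →ₗ[R] (n → R)} :
    μ ∈ fixedBy _ (toConjAct (toLinearEquiv A)) ↔
      ∀ i j, A *ᵥ LinearMap.structConstEquiv n R _ μ i j =
        ∑ k, ∑ l, (A k i * A l j) • LinearMap.structConstEquiv n R _ μ k l := by
  have hcol : ∀ i, (A : Matrix n n R) *ᵥ Pi.single i 1 = fun k => A k i := fun i => by
    ext k; simp
  simp only [LinearMap.toConjAct_mem_fixedBy_iff, toLinearEquiv_apply]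
  constructor
  · intro h i j
    rw [LinearMap.structConstEquiv_apply, h, LinearMap.apply_eq_sum_structConstEquiv, hcol, hcol]
  · intro h
    suffices μ.compr₂ (A : Matrix n n R).mulVecLin =
        μ.compl₁₂ (A : Matrix n n R).mulVecLin (A : Matrix n n R).mulVecLin from
      fun x y => by simpa using LinearMap.congr_fun₂ this x y
    apply (LinearMap.structConstEquiv n R _).injective
    ext i j : 2
    simpa [LinearMap.structConstEquiv_apply, hcol] using
      (h i j).trans (LinearMap.apply_eq_sum_structConstEquiv μ _ _).symm

theorem card_fixedBy_toConjAct_toLinearEquiv (A : GL n R) :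
    Nat.card (fixedBy ((n → R) →ₗ[R] (n → R) →ₗ[R] (n → R)) (toConjAct (toLinearEquiv A))) =
      Nat.card {c : n → n → n → R // ∀ i j, A *ᵥ c i j = ∑ k, ∑ l, (A k i * A l j) • c k l} :=
  Nat.card_congr <| (LinearMap.structConstEquiv n R _).toEquiv.subtypeEquiv fun _ =>
    mem_fixedBy_toConjAct_toLinearEquiv_iff

variable [Fintype R] [DecidableEq R]

theorem card_orbitRel_quotient_conjAct_mul_card :
    Nat.card (orbitRel.Quotient (ConjAct ((n → R) ≃ₗ[R] (n → R)))
      ((n → R) →ₗ[R] (n → R) →ₗ[R] (n → R))) * Nat.card (GL n R) =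
      ∑ A : GL n R, Fintype.card
        {c : n → n → n → R // ∀ i j, A *ᵥ c i j = ∑ k, ∑ l, (A k i * A l j) • c k l} := by
  have := Finite.of_equiv _ (LinearMap.structConstEquiv n R (n → R)).toEquiv.symm
  let e := toLinearEquiv.toEquiv.trans (toConjAct (G := (n → R) ≃ₗ[R] (n → R))).toEquiv
  have := Fintype.ofEquiv _ e
  rw [Nat.card_congr e, card_orbitRel_quotient_mul_card_group, ← e.sum_comp]
  simp only [e, Equiv.trans_apply, MulEquiv.toEquiv_eq_coe, MulEquiv.coe_toEquiv,
    card_fixedBy_toConjAct_toLinearEquiv, Nat.card_eq_fintype_card]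

end Matrix.GeneralLinearGroup

theorem orbitOf_eq_orbit
    (μ : (Fin 2 → ZMod 2) →ₗ[ZMod 2] (Fin 2 → ZMod 2) →ₗ[ZMod 2] (Fin 2 → ZMod 2)) :
    orbitOf μ = orbit (ConjAct ((Fin 2 → ZMod 2) ≃ₗ[ZMod 2] (Fin 2 → ZMod 2))) μ :=
  Set.ext fun _ => LinearMap.mem_orbit_conjAct_iff.symm

/-- There are exactly 52 isomorphism classes of 2-dimensional `F₂`-algebras, i.e.
52 orbits of the `GL(2,F₂)`-action on the 256 bilinear multiplications on `F₂²`. -/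
theorem stmt_19 :
    Nat.card {s : Set ((Fin 2 → ZMod 2) →ₗ[ZMod 2] (Fin 2 → ZMod 2) →ₗ[ZMod 2]
        (Fin 2 → ZMod 2)) // ∃ μ, s = orbitOf μ} = 52 := by
  have hburnside :=
    (Matrix.GeneralLinearGroup.card_orbitRel_quotient_conjAct_mul_card (n := Fin 2)
      (R := ZMod 2)).trans (show _ = 312 by decide +kernel)
  rw [Matrix.card_GL_field] at hburnside
  norm_num at hburnside
  simp_rw [orbitOf_eq_orbit]
  rw [card_orbits_eq_card_orbitRel_quotient]
  omega
end
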